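/- arXiv:2405.16694 — 5 statements merged into one kernel-verified Lean document; each statement's English description precedes it below -/
import Mathlib

section
/- For fixed A > 0 and b ≠ 0, the function g(x) = (A/2 + x)/√((A/2 + x)² + b²) + (A/2 - x)/√((A/2 - x)² + b²) is monotonically decreasing in x for x > 0. -/
/-! With `φ t = t / √(t² + b²)`, the function is `x ↦ φ (A/2 + x) + φ (A/2 - x)`, whose derivative is
`φ' (A/2 + x) - φ' (A/2 - x)`. Here `φ' t = b² / (t² + b²)^(3/2)` is even and strictly decreasing
in `|t|`, and `|A/2 + x| > |A/2 - x|` for `A, x > 0`, so the derivative is negative. -/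

lemma hasDerivAt_div_sqrt_sq_add_sq {b : ℝ} (hb : b ≠ 0) (t : ℝ) :
    HasDerivAt (fun t : ℝ => t / √(t ^ 2 + b ^ 2))
      (b ^ 2 / ((t ^ 2 + b ^ 2) * √(t ^ 2 + b ^ 2))) t := by
  have hpos : 0 < t ^ 2 + b ^ 2 := by positivity
  have hsum : HasDerivAt (fun t : ℝ => t ^ 2 + b ^ 2) (2 * t) t := by
    simpa using (hasDerivAt_pow 2 t).add_const (b ^ 2)
  have hsqrt : HasDerivAt (fun t : ℝ => √(t ^ 2 + b ^ 2))
      (2 * t / (2 * √(t ^ 2 + b ^ 2))) t := hsum.sqrt hpos.ne'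
  refine ((hasDerivAt_id t).div hsqrt (Real.sqrt_pos.mpr hpos).ne').congr_deriv ?_
  have hsq : √(t ^ 2 + b ^ 2) ^ 2 = t ^ 2 + b ^ 2 := Real.sq_sqrt hpos.le
  field_simp
  rw [hsq, id_eq]
  ring

lemma div_mul_sqrt_sq_add_sq_lt {b s t : ℝ} (hb : b ≠ 0) (hst : s ^ 2 < t ^ 2) :
    b ^ 2 / ((t ^ 2 + b ^ 2) * √(t ^ 2 + b ^ 2)) <
      b ^ 2 / ((s ^ 2 + b ^ 2) * √(s ^ 2 + b ^ 2)) := by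
  have hs : 0 < s ^ 2 + b ^ 2 := by positivity
  have hlt : s ^ 2 + b ^ 2 < t ^ 2 + b ^ 2 := by linarith
  have hsqrt_lt : √(s ^ 2 + b ^ 2) < √(t ^ 2 + b ^ 2) := Real.sqrt_lt_sqrt hs.le hlt
  apply div_lt_div_of_pos_left (by positivity) (by positivity)
  exact mul_lt_mul hlt hsqrt_lt.le (Real.sqrt_pos.mpr hs) (by positivity)

/-- For fixed `A > 0` and `b ≠ 0`, the function
`g(x) = (A/2 + x)/√((A/2 + x)² + b²) + (A/2 - x)/√((A/2 - x)² + b²)`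
is monotonically decreasing in `x` for `x > 0`. -/
theorem stmt1 (A b : ℝ) (hA : 0 < A) (hb : b ≠ 0) :
    AntitoneOn (fun x : ℝ =>
      (A / 2 + x) / Real.sqrt ((A / 2 + x) ^ 2 + b ^ 2) +
      (A / 2 - x) / Real.sqrt ((A / 2 - x) ^ 2 + b ^ 2)) (Set.Ioi 0) := by
  set φ' : ℝ → ℝ := fun t => b ^ 2 / ((t ^ 2 + b ^ 2) * √(t ^ 2 + b ^ 2))
  have hderiv : ∀ x, HasDerivAt (fun x : ℝ =>
      (A / 2 + x) / √((A / 2 + x) ^ 2 + b ^ 2) + (A / 2 - x) / √((A / 2 - x) ^ 2 + b ^ 2))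
      (φ' (A / 2 + x) - φ' (A / 2 - x)) x := fun x =>
    ((hasDerivAt_div_sqrt_sq_add_sq hb _).comp_const_add (A / 2) x).add
      ((hasDerivAt_div_sqrt_sq_add_sq hb _).comp_const_sub (A / 2) x)
  refine antitoneOn_of_hasDerivWithinAt_nonpos (convex_Ioi 0)
    (fun x _ => (hderiv x).continuousAt.continuousWithinAt)
    (fun x _ => (hderiv x).hasDerivWithinAt) fun x hx => ?_
  rw [interior_Ioi, Set.mem_Ioi] at hx
  have hsq : (A / 2 - x) ^ 2 < (A / 2 + x) ^ 2 := by nlinarith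
  exact sub_nonpos.2 (div_mul_sqrt_sq_add_sq_lt hb hsq).le
end

section
/- Let d > 0 (d = rΨ). The double integral over the rectangle [−A_x/2 − p, A_x/2 − p] × [−A_z/2 − q, A_z/2 − q] of d/(x² + d² + z²)^{3/2} dx dz equals the sum over x ∈ {A_x/2 + p, A_x/2 − p} and z ∈ {A_z/2 + q, A_z/2 − q} of arctan(xz/(d·√(d² + x² + z²))). -/
/-- Sum over the four corners `x ∈ {A_x/2 ± p}`, `z ∈ {A_z/2 ± q}` of
`arctan(xz/(d·√(d² + x² + z²)))`. -/
noncomputable def cornerSum (d Ax Az p q : ℝ) : ℝ :=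
  Real.arctan ((Ax / 2 + p) * (Az / 2 + q) /
      (d * Real.sqrt (d ^ 2 + (Ax / 2 + p) ^ 2 + (Az / 2 + q) ^ 2))) +
  Real.arctan ((Ax / 2 + p) * (Az / 2 - q) /
      (d * Real.sqrt (d ^ 2 + (Ax / 2 + p) ^ 2 + (Az / 2 - q) ^ 2))) +
  Real.arctan ((Ax / 2 - p) * (Az / 2 + q) /
      (d * Real.sqrt (d ^ 2 + (Ax / 2 - p) ^ 2 + (Az / 2 + q) ^ 2))) +
  Real.arctan ((Ax / 2 - p) * (Az / 2 - q) /
      (d * Real.sqrt (d ^ 2 + (Ax / 2 - p) ^ 2 + (Az / 2 - q) ^ 2)))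

/-! `F(x, z) = arctan (x z / (d √(d² + x² + z²)))` has `∂_z F = d x / ((d² + z²) √(d² + x² + z²))`,
whose `x`-derivative is the integrand `d / (x² + d² + z²)^{3/2}`. Two applications of the
fundamental theorem of calculus give `F(b, e) - F(a, e) - F(b, c) + F(a, c)` for the iterated
integral over `[a, b] × [c, e]`, and since `F` is odd in each variable, the four corners of the
shifted rectangle become the four terms of `cornerSum`. -/

open Real

noncomputable def cornerAngle (d x z : ℝ) : ℝ :=
  arctan (x * z / (d * √(d ^ 2 + x ^ 2 + z ^ 2)))

lemma cornerAngle_neg_left (d x z : ℝ) : cornerAngle d (-x) z = -cornerAngle d x z := by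
  simp [cornerAngle, neg_div, arctan_neg]

lemma cornerAngle_neg_right (d x z : ℝ) : cornerAngle d x (-z) = -cornerAngle d x z := by
  simp [cornerAngle, neg_div, arctan_neg]

lemma rpow_three_halves {t : ℝ} (ht : 0 ≤ t) : t ^ (3 / 2 : ℝ) = √t ^ 3 := by
  rw [sqrt_eq_rpow, ← rpow_natCast, ← rpow_mul ht]
  norm_num

lemma hasDerivAt_cornerAngle_right {d : ℝ} (hd : d ≠ 0) (x z : ℝ) :
    HasDerivAt (cornerAngle d x)
      (d * x / ((d ^ 2 + z ^ 2) * √(d ^ 2 + x ^ 2 + z ^ 2))) z := by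
  have hpos : 0 < d ^ 2 + x ^ 2 + z ^ 2 := by positivity
  have hs : √(d ^ 2 + x ^ 2 + z ^ 2) ^ 2 = d ^ 2 + x ^ 2 + z ^ 2 := sq_sqrt hpos.le
  have hs0 : √(d ^ 2 + x ^ 2 + z ^ 2) ≠ 0 := (sqrt_pos.2 hpos).ne'
  have hq : HasDerivAt (fun z => d ^ 2 + x ^ 2 + z ^ 2) (2 * z) z := by
    simpa using (hasDerivAt_pow 2 z).const_add (d ^ 2 + x ^ 2)
  have h := (((hasDerivAt_id' z).const_mul x).div ((hq.sqrt hpos.ne').const_mul d)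
    (mul_ne_zero hd hs0)).arctan
  simp only [Pi.div_apply] at h
  refine h.congr_deriv ?_
  field_simp
  rw [hs]
  ring

lemma hasDerivAt_cornerAngle_right_deriv {d : ℝ} (hd : d ≠ 0) (z x : ℝ) :
    HasDerivAt (fun x => d * x / ((d ^ 2 + z ^ 2) * √(d ^ 2 + x ^ 2 + z ^ 2)))
      (d / (x ^ 2 + d ^ 2 + z ^ 2) ^ (3 / 2 : ℝ)) x := by
  have hpos : 0 < d ^ 2 + x ^ 2 + z ^ 2 := by positivity
  have hs : √(d ^ 2 + x ^ 2 + z ^ 2) ^ 2 = d ^ 2 + x ^ 2 + z ^ 2 := sq_sqrt hpos.le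
  have hs0 : √(d ^ 2 + x ^ 2 + z ^ 2) ≠ 0 := (sqrt_pos.2 hpos).ne'
  have hq : HasDerivAt (fun x => d ^ 2 + x ^ 2 + z ^ 2) (2 * x) x := by
    simpa using ((hasDerivAt_pow 2 x).const_add (d ^ 2)).add_const (z ^ 2)
  have hdz : d ^ 2 + z ^ 2 ≠ 0 := by positivity
  have h := ((hasDerivAt_id' x).const_mul d).div ((hq.sqrt hpos.ne').const_mul (d ^ 2 + z ^ 2))
    (mul_ne_zero hdz hs0)
  refine h.congr_deriv ?_
  rw [show x ^ 2 + d ^ 2 + z ^ 2 = d ^ 2 + x ^ 2 + z ^ 2 by ring, rpow_three_halves hpos.le]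
  field_simp
  rw [hs]
  ring

lemma integral_div_rpow_three_halves {d : ℝ} (hd : d ≠ 0) (z a b : ℝ) :
    ∫ x in a..b, d / (x ^ 2 + d ^ 2 + z ^ 2) ^ (3 / 2 : ℝ) =
      d * b / ((d ^ 2 + z ^ 2) * √(d ^ 2 + b ^ 2 + z ^ 2)) -
        d * a / ((d ^ 2 + z ^ 2) * √(d ^ 2 + a ^ 2 + z ^ 2)) := by
  have hcont : Continuous fun x : ℝ => d / (x ^ 2 + d ^ 2 + z ^ 2) ^ (3 / 2 : ℝ) :=
    continuous_const.div (by fun_prop (disch := norm_num)) fun x => by positivity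
  exact intervalIntegral.integral_eq_sub_of_hasDerivAt
    (fun x _ => hasDerivAt_cornerAngle_right_deriv hd z x) (hcont.intervalIntegrable a b)

lemma integral_integral_div_rpow_three_halves {d : ℝ} (hd : d ≠ 0) (a b c e : ℝ) :
    ∫ z in c..e, ∫ x in a..b, d / (x ^ 2 + d ^ 2 + z ^ 2) ^ (3 / 2 : ℝ) =
      cornerAngle d b e - cornerAngle d a e - cornerAngle d b c + cornerAngle d a c := by
  have hcont (x : ℝ) :
      Continuous fun z => d * x / ((d ^ 2 + z ^ 2) * √(d ^ 2 + x ^ 2 + z ^ 2)) :=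
    continuous_const.div (by fun_prop) fun z => by positivity
  simp_rw [integral_div_rpow_three_halves hd]
  rw [intervalIntegral.integral_eq_sub_of_hasDerivAt
    (fun z _ => (hasDerivAt_cornerAngle_right hd b z).sub (hasDerivAt_cornerAngle_right hd a z))
    (((hcont b).sub (hcont a)).intervalIntegrable c e), Pi.sub_apply, Pi.sub_apply]
  ring

lemma cornerSum_eq (d Ax Az p q : ℝ) :
    cornerSum d Ax Az p q =
      cornerAngle d (Ax / 2 - p) (Az / 2 - q) - cornerAngle d (-Ax / 2 - p) (Az / 2 - q) -
        cornerAngle d (Ax / 2 - p) (-Az / 2 - q) + cornerAngle d (-Ax / 2 - p) (-Az / 2 - q) := by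
  have hsum : cornerSum d Ax Az p q =
      cornerAngle d (Ax / 2 + p) (Az / 2 + q) + cornerAngle d (Ax / 2 + p) (Az / 2 - q) +
        cornerAngle d (Ax / 2 - p) (Az / 2 + q) + cornerAngle d (Ax / 2 - p) (Az / 2 - q) := rfl
  rw [hsum, show -Ax / 2 - p = -(Ax / 2 + p) by ring, show -Az / 2 - q = -(Az / 2 + q) by ring,
    cornerAngle_neg_left, cornerAngle_neg_left, cornerAngle_neg_right, cornerAngle_neg_right]
  ring

theorem stmt5_general (Ax Az p q d : ℝ) (hd : 0 < d) :
    (∫ z in (-Az / 2 - q)..(Az / 2 - q), ∫ x in (-Ax / 2 - p)..(Ax / 2 - p),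
        d / (x ^ 2 + d ^ 2 + z ^ 2) ^ ((3 : ℝ) / 2)) =
      cornerSum d Ax Az p q := by
  rw [integral_integral_div_rpow_three_halves hd.ne', cornerSum_eq]

/-- The channel-gain integral of `d/(x² + d² + z²)^{3/2}` over the rectangle
`[−A_x/2 − p, A_x/2 − p] × [−A_z/2 − q, A_z/2 − q]` equals the four-corner
arctan sum. -/
theorem stmt5 (Ax Az p q d : ℝ) (hAx : 0 < Ax) (hAz : 0 < Az) (hd : 0 < d) :
    (∫ z in (-Az / 2 - q)..(Az / 2 - q), ∫ x in (-Ax / 2 - p)..(Ax / 2 - p),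
        d / (x ^ 2 + d ^ 2 + z ^ 2) ^ ((3 : ℝ) / 2)) =
      cornerSum d Ax Az p q :=
  stmt5_general Ax Az p q d hd
end

section
/- For fixed d > 0 and A_x, A_z > 0, the function (p, q) ↦ Σ_{x ∈ {A_x/2 ± p}} Σ_{z ∈ {A_z/2 ± q}} arctan(xz/(d·√(d² + x² + z²))) is monotonically decreasing in |p| for fixed q and monotonically decreasing in |q| for fixed p. -/
open Real Set

noncomputable def rectAngle (d x z : ℝ) : ℝ :=
  arctan (x * z / (d * √(d ^ 2 + x ^ 2 + z ^ 2)))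

noncomputable def rectAngleSlope (u z : ℝ) : ℝ :=
  z / (u * √(u + z ^ 2))

noncomputable def slopeDecay (u z : ℝ) : ℝ :=
  z * (3 * u + 2 * z ^ 2) / ((u + z ^ 2) * √(u + z ^ 2))

theorem hasDerivAt_rectAngle {d : ℝ} (hd : d ≠ 0) (x z : ℝ) :
    HasDerivAt (fun x => rectAngle d x z) (d * rectAngleSlope (d ^ 2 + x ^ 2) z) x := by
  have hS : 0 < d ^ 2 + x ^ 2 + z ^ 2 := by positivity
  have hr : √(d ^ 2 + x ^ 2 + z ^ 2) ^ 2 = d ^ 2 + x ^ 2 + z ^ 2 := sq_sqrt hS.le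
  have hsqrt : HasDerivAt (fun x => √(d ^ 2 + x ^ 2 + z ^ 2))
      (2 * x / (2 * √(d ^ 2 + x ^ 2 + z ^ 2))) x := by
    simpa using (((hasDerivAt_pow 2 x).const_add (d ^ 2)).add_const (z ^ 2)).sqrt hS.ne'
  have h := (((hasDerivAt_id x).mul_const z).div (hsqrt.const_mul d) (by positivity)).arctan
  refine h.congr_deriv ?_
  simp only [rectAngleSlope, Pi.div_apply, id]
  field_simp
  linear_combination (z * x ^ 2) * hr

theorem hasDerivAt_slopeDecay {u : ℝ} (hu : 0 < u) (z : ℝ) :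
    HasDerivAt (slopeDecay u) (3 * u ^ 2 / ((u + z ^ 2) ^ 2 * √(u + z ^ 2))) z := by
  have hS : 0 < u + z ^ 2 := by positivity
  have hr : √(u + z ^ 2) ^ 2 = u + z ^ 2 := sq_sqrt hS.le
  have hr0 : √(u + z ^ 2) ≠ 0 := (sqrt_pos.2 hS).ne'
  have hpow := (hasDerivAt_pow 2 z).const_add u
  have hnum := (hasDerivAt_id z).mul (((hasDerivAt_pow 2 z).const_mul 2).const_add (3 * u))
  have h := hnum.div (hpow.mul (hpow.sqrt hS.ne')) (mul_ne_zero hS.ne' hr0)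
  refine h.congr_deriv ?_
  simp only [Pi.mul_apply, id]
  field_simp
  linear_combination (6 * u * z ^ 2 + 4 * z ^ 4) * hr

theorem hasDerivAt_rectAngleSlope {u : ℝ} (hu : 0 < u) (z : ℝ) :
    HasDerivAt (fun u => rectAngleSlope u z) (-slopeDecay u z / (2 * u ^ 2)) u := by
  have hS : 0 < u + z ^ 2 := by positivity
  have hr : √(u + z ^ 2) ^ 2 = u + z ^ 2 := sq_sqrt hS.le
  have hr0 : √(u + z ^ 2) ≠ 0 := (sqrt_pos.2 hS).ne'
  have hlin := (hasDerivAt_id u).add_const (z ^ 2)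
  have h := (hasDerivAt_const u z).div ((hasDerivAt_id u).mul (hlin.sqrt hS.ne'))
    (mul_ne_zero hu.ne' hr0)
  refine h.congr_deriv ?_
  simp only [slopeDecay, Pi.mul_apply, id]
  field_simp
  linear_combination (u * z) * hr

theorem slopeDecay_neg (u z : ℝ) : slopeDecay u (-z) = -slopeDecay u z := by
  simp only [slopeDecay, neg_sq]
  ring

theorem monotone_slopeDecay {u : ℝ} (hu : 0 < u) : Monotone (slopeDecay u) :=
  monotone_of_hasDerivAt_nonneg (hasDerivAt_slopeDecay hu) fun _ => by positivity

theorem antitoneOn_rectAngleSlope_add {z₁ z₂ : ℝ} (hz : |z₂| ≤ z₁) :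
    AntitoneOn (fun u => rectAngleSlope u z₁ + rectAngleSlope u z₂) (Ioi 0) := by
  have hderiv (u : ℝ) (hu : 0 < u) :
      HasDerivAt (fun u => rectAngleSlope u z₁ + rectAngleSlope u z₂)
        (-(slopeDecay u z₁ + slopeDecay u z₂) / (2 * u ^ 2)) u :=
    ((hasDerivAt_rectAngleSlope hu z₁).add (hasDerivAt_rectAngleSlope hu z₂)).congr_deriv
      (by ring)
  refine antitoneOn_of_hasDerivWithinAt_nonpos (convex_Ioi 0)
    (f' := fun u => -(slopeDecay u z₁ + slopeDecay u z₂) / (2 * u ^ 2))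
    (fun u hu => (hderiv u hu).continuousAt.continuousWithinAt) (fun u hu => ?_) fun u hu => ?_
  · rw [interior_Ioi] at hu
    exact (hderiv u hu).hasDerivWithinAt
  · rw [interior_Ioi] at hu
    have hdecay : -slopeDecay u z₁ ≤ slopeDecay u z₂ := by
      rw [← slopeDecay_neg]
      exact monotone_slopeDecay hu ((neg_le_neg hz).trans (neg_abs_le z₂))
    exact div_nonpos_of_nonpos_of_nonneg (by linarith) (by positivity)

theorem antitoneOn_add_comp_add_sub {F F' : ℝ → ℝ} (hF : ∀ x, HasDerivAt F (F' x) x)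
    (hF' : ∀ x y, |x| ≤ |y| → F' y ≤ F' x) {a : ℝ} (ha : 0 ≤ a) :
    AntitoneOn (fun p => F (a + p) + F (a - p)) (Ici 0) := by
  have hderiv (p : ℝ) :
      HasDerivAt (fun p => F (a + p) + F (a - p)) (F' (a + p) - F' (a - p)) p :=
    (((hF (a + p)).comp p ((hasDerivAt_id p).const_add a)).add
      ((hF (a - p)).comp p ((hasDerivAt_id p).const_sub a))).congr_deriv (by ring)
  refine antitoneOn_of_hasDerivWithinAt_nonpos (convex_Ici 0)
    (fun p _ => (hderiv p).continuousAt.continuousWithinAt)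
    (fun p _ => (hderiv p).hasDerivWithinAt) fun p hp => ?_
  rw [interior_Ici] at hp
  have habs : |a - p| ≤ |a + p| := by
    rw [abs_of_nonneg (by linarith [mem_Ioi.1 hp] : 0 ≤ a + p)]
    exact abs_le.2 ⟨by linarith, by linarith [mem_Ioi.1 hp]⟩
  linarith [hF' _ _ habs]

theorem cornerSum_abs_left (d Ax Az p q : ℝ) :
    cornerSum d Ax Az |p| q = cornerSum d Ax Az p q := by
  rcases abs_choice p with h | h <;> rw [h]
  unfold cornerSum
  ring_nf

theorem cornerSum_abs_right (d Ax Az p q : ℝ) :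
    cornerSum d Ax Az p |q| = cornerSum d Ax Az p q := by
  rcases abs_choice q with h | h <;> rw [h]
  unfold cornerSum
  ring_nf

theorem cornerSum_comm (d Ax Az p q : ℝ) : cornerSum d Ax Az p q = cornerSum d Az Ax q p := by
  unfold cornerSum
  ring_nf

theorem cornerSum_eq_rectAngle (d Ax Az p q : ℝ) :
    cornerSum d Ax Az p q =
      rectAngle d (Ax / 2 + p) (Az / 2 + q) + rectAngle d (Ax / 2 + p) (Az / 2 - q) +
        (rectAngle d (Ax / 2 - p) (Az / 2 + q) + rectAngle d (Ax / 2 - p) (Az / 2 - q)) :=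
  add_assoc _ _ _

theorem cornerSum_le_of_abs_le_left {d Ax Az : ℝ} (hd : 0 < d) (hAx : 0 ≤ Ax) (hAz : 0 ≤ Az)
    (q : ℝ) {p₁ p₂ : ℝ} (hp : |p₁| ≤ |p₂|) :
    cornerSum d Ax Az p₂ q ≤ cornerSum d Ax Az p₁ q := by
  rw [← cornerSum_abs_right d Ax Az p₁, ← cornerSum_abs_right d Ax Az p₂,
    ← cornerSum_abs_left d Ax Az p₁, ← cornerSum_abs_left d Ax Az p₂,
    cornerSum_eq_rectAngle, cornerSum_eq_rectAngle]
  set b := Az / 2 + |q| with hb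
  set c := Az / 2 - |q| with hc
  have hz : |c| ≤ b := abs_le.2 ⟨by linarith, by linarith [abs_nonneg q]⟩
  have hslope (x y : ℝ) (hxy : |x| ≤ |y|) :
      d * rectAngleSlope (d ^ 2 + y ^ 2) b + d * rectAngleSlope (d ^ 2 + y ^ 2) c ≤
        d * rectAngleSlope (d ^ 2 + x ^ 2) b + d * rectAngleSlope (d ^ 2 + x ^ 2) c := by
    simp only [← mul_add]
    refine mul_le_mul_of_nonneg_left (antitoneOn_rectAngleSlope_add hz ?_ ?_ ?_) hd.le
    · exact mem_Ioi.2 (by positivity)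
    · exact mem_Ioi.2 (by positivity)
    · exact add_le_add_right (sq_le_sq.2 hxy) _
  exact antitoneOn_add_comp_add_sub
    (fun x => (hasDerivAt_rectAngle hd.ne' x b).add (hasDerivAt_rectAngle hd.ne' x c))
    hslope (by linarith) (abs_nonneg p₁) (abs_nonneg p₂) hp

/-- The LoS SNR objective is monotonically decreasing in `|p|` for fixed `q`
and monotonically decreasing in `|q|` for fixed `p`. -/
theorem stmt6 (d Ax Az : ℝ) (hd : 0 < d) (hAx : 0 < Ax) (hAz : 0 < Az) :
    (∀ q p₁ p₂ : ℝ, |p₁| ≤ |p₂| →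
        cornerSum d Ax Az p₂ q ≤ cornerSum d Ax Az p₁ q) ∧
    (∀ p q₁ q₂ : ℝ, |q₁| ≤ |q₂| →
        cornerSum d Ax Az p q₂ ≤ cornerSum d Ax Az p q₁) := by
  refine ⟨fun q _ _ hp => cornerSum_le_of_abs_le_left hd hAx.le hAz.le q hp,
    fun p q₁ q₂ hq => ?_⟩
  rw [cornerSum_comm d Ax Az p q₁, cornerSum_comm d Ax Az p q₂]
  exact cornerSum_le_of_abs_le_left hd hAz.le hAx.le p hq
end

section
/- The function f(x) = arctan(x/(c·√(c² + 2x))) for c > 0, x > 0 is strictly concave: its second derivative is negative for all x > 0. -/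
/-!
Writing `s = √(c² + 2x)`, the derivative of `arctan (x / (c s))` simplifies to
`c / ((c² + x) s)`. On `c² + 2x > 0` both `c² + x` and `s` are positive and increasing, so this
derivative is decreasing; explicitly the second derivative is `-c (2c² + 3x) / ((c² + x)² s³) < 0`.
-/

open Real Set

noncomputable def arctanRatio (c x : ℝ) : ℝ := arctan (x / (c * √(c ^ 2 + 2 * x)))

noncomputable def arctanRatioDeriv (c x : ℝ) : ℝ := c / ((c ^ 2 + x) * √(c ^ 2 + 2 * x))

section

variable {c x : ℝ}

lemma hasDerivAt_sqrt_sq_add_two_mul (hx : 0 < c ^ 2 + 2 * x) :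
    HasDerivAt (fun y => √(c ^ 2 + 2 * y)) (1 / √(c ^ 2 + 2 * x)) x := by
  have hlin : HasDerivAt (fun y => c ^ 2 + 2 * y) 2 x := by
    simpa using ((hasDerivAt_id' x).const_mul 2).const_add (c ^ 2)
  refine (hlin.sqrt hx.ne').congr_deriv ?_
  field_simp

lemma sq_add_pos_of_sq_add_two_mul_pos (hx : 0 < c ^ 2 + 2 * x) : 0 < c ^ 2 + x := by
  nlinarith [sq_nonneg c]

lemma hasDerivAt_arctanRatio (hc : c ≠ 0) (hx : 0 < c ^ 2 + 2 * x) :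
    HasDerivAt (arctanRatio c) (arctanRatioDeriv c x) x := by
  have hs : 0 < √(c ^ 2 + 2 * x) := sqrt_pos.mpr hx
  have hs2 : √(c ^ 2 + 2 * x) ^ 2 = c ^ 2 + 2 * x := sq_sqrt hx.le
  have hcx := sq_add_pos_of_sq_add_two_mul_pos hx
  have hquot : HasDerivAt (fun y => y / (c * √(c ^ 2 + 2 * y)))
      ((1 * (c * √(c ^ 2 + 2 * x)) - x * (c * (1 / √(c ^ 2 + 2 * x)))) /
        (c * √(c ^ 2 + 2 * x)) ^ 2) x :=
    (hasDerivAt_id' x).div ((hasDerivAt_sqrt_sq_add_two_mul hx).const_mul c)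
      (mul_ne_zero hc hs.ne')
  refine hquot.arctan.congr_deriv ?_
  rw [arctanRatioDeriv]
  generalize √(c ^ 2 + 2 * x) = s at hs hs2 ⊢
  field_simp
  linear_combination x * hs2

lemma hasDerivAt_arctanRatioDeriv (hx : 0 < c ^ 2 + 2 * x) :
    HasDerivAt (arctanRatioDeriv c)
      (-(c * (2 * c ^ 2 + 3 * x)) / ((c ^ 2 + x) ^ 2 * √(c ^ 2 + 2 * x) ^ 3)) x := by
  have hs : 0 < √(c ^ 2 + 2 * x) := sqrt_pos.mpr hx
  have hs2 : √(c ^ 2 + 2 * x) ^ 2 = c ^ 2 + 2 * x := sq_sqrt hx.le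
  have hcx := sq_add_pos_of_sq_add_two_mul_pos hx
  have hden : HasDerivAt (fun y => (c ^ 2 + y) * √(c ^ 2 + 2 * y))
      (1 * √(c ^ 2 + 2 * x) + (c ^ 2 + x) * (1 / √(c ^ 2 + 2 * x))) x :=
    ((hasDerivAt_id' x).const_add (c ^ 2)).mul (hasDerivAt_sqrt_sq_add_two_mul hx)
  refine ((hasDerivAt_const x c).div hden (by positivity)).congr_deriv ?_
  generalize √(c ^ 2 + 2 * x) = s at hs hs2 ⊢
  field_simp
  linear_combination (-c) * hs2

lemma deriv_arctanRatio_eventuallyEq (hc : c ≠ 0) (hx : 0 < c ^ 2 + 2 * x) :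
    deriv (arctanRatio c) =ᶠ[nhds x] arctanRatioDeriv c := by
  have hopen : IsOpen {y : ℝ | 0 < c ^ 2 + 2 * y} := isOpen_lt continuous_const (by fun_prop)
  filter_upwards [hopen.mem_nhds hx] with y hy
  exact (hasDerivAt_arctanRatio hc hy).deriv

lemma deriv_deriv_arctanRatio_neg (hc : 0 < c) (hx : 0 < c ^ 2 + 2 * x) :
    deriv (deriv (arctanRatio c)) x < 0 := by
  rw [(deriv_arctanRatio_eventuallyEq hc.ne' hx).deriv_eq,
    (hasDerivAt_arctanRatioDeriv hx).deriv]
  have hs : 0 < √(c ^ 2 + 2 * x) := sqrt_pos.mpr hx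
  have hcx := sq_add_pos_of_sq_add_two_mul_pos hx
  have hnum : 0 < 2 * c ^ 2 + 3 * x := by nlinarith [sq_nonneg c]
  exact div_neg_of_neg_of_pos (neg_neg_of_pos (by positivity)) (by positivity)

lemma strictConcaveOn_arctanRatio (hc : 0 < c) :
    StrictConcaveOn ℝ (Ioi (-c ^ 2 / 2)) (arctanRatio c) := by
  have hdom (y : ℝ) (hy : y ∈ Ioi (-c ^ 2 / 2)) : 0 < c ^ 2 + 2 * y := by
    linarith [mem_Ioi.mp hy]
  refine strictConcaveOn_of_deriv2_neg (convex_Ioi _) (fun y hy => ?_) fun y hy => ?_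
  · exact (hasDerivAt_arctanRatio hc.ne' (hdom y hy)).continuousAt.continuousWithinAt
  · rw [interior_Ioi] at hy
    simpa only [Function.iterate_succ, Function.iterate_zero, Function.comp_apply, id]
      using deriv_deriv_arctanRatio_neg hc (hdom y hy)

end

/-- For `c > 0`, the function `f(x) = arctan(x/(c·√(c² + 2x)))` is strictly
concave on `x > 0`: its second derivative is negative for all `x > 0`. -/
theorem stmt9 (c : ℝ) (hc : 0 < c) :
    StrictConcaveOn ℝ (Set.Ioi 0)
      (fun x : ℝ => Real.arctan (x / (c * Real.sqrt (c ^ 2 + 2 * x)))) ∧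
    ∀ x : ℝ, 0 < x →
      deriv (deriv
        (fun x : ℝ => Real.arctan (x / (c * Real.sqrt (c ^ 2 + 2 * x))))) x
        < 0 := by
  refine ⟨(strictConcaveOn_arctanRatio hc).subset
    (Ioi_subset_Ioi (by linarith [sq_nonneg c])) (convex_Ioi 0), fun x hx => ?_⟩
  exact deriv_deriv_arctanRatio_neg hc (by positivity)
end

section
/- For every sufficiently large τ, (1/2)(1 − (1 + 4τ/π)^{−1/2}) > (1/π)·arctan(τ/√(1 + 2τ)); i.e., in the near-field regime a circular activated aperture of the same area achieves a strictly larger normalized SNR than a square one, and the asymptotic coefficients satisfy √π/4 < √2/π (equivalently 2√2/π > √π/2). -/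
/-!
With `x = √(1 + 2τ)/τ` we have `arctan (τ/√(1 + 2τ)) = π/2 - arctan x`, so the claim reads
`(π/2)(1 + 4τ/π)^{-1/2} < arctan x`. Since `arctan x > sin (arctan x) = x/√(1 + x²) = √(1 + 2τ)/(τ + 1)`,
squaring reduces it to the polynomial inequality `π³(τ + 1)² < 4(1 + 2τ)(π + 4τ)`, whose leading
coefficients compare as `π³ < 32`. The same inequality `π³ < 32` is the squared form of `√π/4 < √2/π`.
-/

open Real Filter

lemma Real.div_sqrt_one_add_sq_lt_arctan {x : ℝ} (hx : 0 < x) : x / √(1 + x ^ 2) < arctan x :=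
  sin_arctan x ▸ sin_lt (arctan_pos.mpr hx)

lemma sqrt_one_add_two_mul_div_add_one_lt_arctan {τ : ℝ} (hτ : 0 < τ) :
    √(1 + 2 * τ) / (τ + 1) < arctan (√(1 + 2 * τ) / τ) := by
  have hsqrt : √(1 + (√(1 + 2 * τ) / τ) ^ 2) = (τ + 1) / τ := by
    rw [div_pow, sq_sqrt (by positivity), sqrt_eq_iff_mul_self_eq_of_pos (by positivity)]
    field_simp
    ring
  have h := div_sqrt_one_add_sq_lt_arctan (x := √(1 + 2 * τ) / τ) (by positivity)
  rwa [hsqrt, div_div_div_cancel_right₀ hτ.ne'] at h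

lemma Real.pi_pow_three_lt : π ^ 3 < 31.01 :=
  (pow_lt_pow_left₀ pi_lt_d4 pi_pos.le three_ne_zero).trans_le (by norm_num)

lemma pi_pow_three_mul_add_one_sq_lt {τ : ℝ} (hτ : 100 ≤ τ) :
    π ^ 3 * (τ + 1) ^ 2 < 4 * (1 + 2 * τ) * (π + 4 * τ) := by
  have hτ0 : 0 < τ := by linarith
  have hπ3 := pi_pow_three_lt
  nlinarith [mul_lt_mul_of_pos_right hπ3 (pow_pos hτ0 2), mul_lt_mul_of_pos_right hπ3 hτ0,
    mul_lt_mul_of_pos_right pi_gt_three hτ0, pi_gt_three]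

lemma half_pi_mul_rpow_lt {τ : ℝ} (hτ : 100 ≤ τ) :
    π / 2 * (1 + 4 * τ / π) ^ (-(1 : ℝ) / 2) < √(1 + 2 * τ) / (τ + 1) := by
  have hπ := pi_pos
  have hb : 0 < 1 + 4 * τ / π := by positivity
  have hlhs : ((1 + 4 * τ / π) ^ (-(1 : ℝ) / 2)) ^ 2 = (1 + 4 * τ / π)⁻¹ := by
    rw [← rpow_natCast, ← rpow_mul hb.le]
    norm_num [rpow_neg_one]
  have hrhs : (√(1 + 2 * τ) / (τ + 1)) ^ 2 = (1 + 2 * τ) / (τ + 1) ^ 2 := by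
    rw [div_pow, sq_sqrt (by linarith)]
  refine lt_of_pow_lt_pow_left₀ 2 (by positivity) ?_
  rw [mul_pow, hlhs, hrhs, ← div_eq_mul_inv, div_lt_div_iff₀ hb (by positivity)]
  field_simp
  linarith [pi_pow_three_mul_add_one_sq_lt hτ]

lemma sqrt_pi_mul_pi_lt_four_mul_sqrt_two : √π * π < 4 * √2 := by
  refine lt_of_pow_lt_pow_left₀ 2 (by positivity) ?_
  rw [mul_pow, mul_pow, sq_sqrt pi_pos.le, sq_sqrt zero_le_two]
  linarith [pi_pow_three_lt]

/-- For every sufficiently large `τ`, the circular aperture's normalized SNR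
`(1/2)(1 − (1 + 4τ/π)^{−1/2})` strictly exceeds the square aperture's
`(1/π)·arctan(τ/√(1 + 2τ))`; moreover the asymptotic coefficients satisfy
`√π/4 < √2/π` (equivalently `2√2/π > √π/2`). -/
theorem stmt15 :
    (∀ᶠ τ : ℝ in atTop,
      (1 / π) * Real.arctan (τ / Real.sqrt (1 + 2 * τ)) <
        (1 / 2) * (1 - (1 + 4 * τ / π) ^ (-(1 : ℝ) / 2))) ∧
    Real.sqrt π / 4 < Real.sqrt 2 / π ∧
    2 * Real.sqrt 2 / π > Real.sqrt π / 2 := by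
  have hπ := pi_pos
  have hcoeff : √π / 4 < √2 / π := by
    rw [div_lt_div_iff₀ (by norm_num) hπ]
    linarith [sqrt_pi_mul_pi_lt_four_mul_sqrt_two]
  refine ⟨?_, hcoeff, by rw [gt_iff_lt, mul_div_assoc]; linarith⟩
  filter_upwards [eventually_ge_atTop 100] with τ hτ
  have hsplit : 1 / π * arctan (τ / √(1 + 2 * τ)) = 1 / 2 - arctan (√(1 + 2 * τ) / τ) / π := by
    rw [← inv_div (√(1 + 2 * τ)), arctan_inv_of_pos (by positivity)]
    field_simp
  set A := arctan (√(1 + 2 * τ) / τ)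
  have hA : π / 2 * (1 + 4 * τ / π) ^ (-(1 : ℝ) / 2) < A :=
    (half_pi_mul_rpow_lt hτ).trans (sqrt_one_add_two_mul_div_add_one_lt_arctan (by linarith))
  have hA' : 1 / 2 * (1 + 4 * τ / π) ^ (-(1 : ℝ) / 2) < A / π := by
    rw [lt_div_iff₀ hπ]
    linarith
  linarith
end
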